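/- Let Θ be a nonempty metric space, K ≥ 0, L : Θ → ℝ a K-Lipschitz function with finite sample points θ₁,...,θₙ (n ≥ 1). If θ* ∈ Θ is a maximizer of some K-Lipschitz function g : Θ → ℝ satisfying g(θᵢ) = L(θᵢ) for all i, then min_i (L(θᵢ) + K·dist(θ*, θᵢ)) ≥ max_i L(θᵢ). -/

import Mathlib

theorem le_add_mul_dist_of_forall_le {α : Type*} [PseudoMetricSpace α] {g : α → ℝ} {K : ℝ}
    (hg : ∀ x y : α, |g x - g y| ≤ K * dist x y) {θ : α} (hmax : ∀ x, g x ≤ g θ) (x y : α) :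
    g x ≤ g y + K * dist θ y := by
  have hcone : g θ - g y ≤ K * dist θ y := (abs_le.mp (hg θ y)).2
  linarith [hmax x]

theorem lipo_potential_maximizer_general {Θ : Type*} [MetricSpace Θ]
    (K : ℝ) (L : Θ → ℝ)
    (n : ℕ) (hn : 0 < n) (p : Fin n → Θ)
    (g : Θ → ℝ) (hg : ∀ x y : Θ, |g x - g y| ≤ K * dist x y)
    (hconsistent : ∀ i : Fin n, g (p i) = L (p i))
    (θstar : Θ) (hmax : ∀ θ : Θ, g θ ≤ g θstar) :
    Finset.univ.sup' (Finset.univ_nonempty_iff.mpr ⟨⟨0, hn⟩⟩) (fun i => L (p i)) ≤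
      Finset.univ.inf' (Finset.univ_nonempty_iff.mpr ⟨⟨0, hn⟩⟩)
        (fun i => L (p i) + K * dist θstar (p i)) := by
  refine Finset.sup'_le _ _ fun j _ => Finset.le_inf' _ _ fun i _ => ?_
  simpa only [hconsistent] using le_add_mul_dist_of_forall_le hg hmax (p j) (p i)

theorem lipo_potential_maximizer {Θ : Type*} [MetricSpace Θ] [Nonempty Θ]
    (K : ℝ) (hK : 0 ≤ K) (L : Θ → ℝ)
    (hLip : ∀ x y : Θ, |L x - L y| ≤ K * dist x y)
    (n : ℕ) (hn : 0 < n) (p : Fin n → Θ)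
    (g : Θ → ℝ) (hg : ∀ x y : Θ, |g x - g y| ≤ K * dist x y)
    (hconsistent : ∀ i : Fin n, g (p i) = L (p i))
    (θstar : Θ) (hmax : ∀ θ : Θ, g θ ≤ g θstar) :
    Finset.univ.sup' (Finset.univ_nonempty_iff.mpr ⟨⟨0, hn⟩⟩) (fun i => L (p i)) ≤
      Finset.univ.inf' (Finset.univ_nonempty_iff.mpr ⟨⟨0, hn⟩⟩)
        (fun i => L (p i) + K * dist θstar (p i)) :=
  lipo_potential_maximizer_general K L n hn p g hg hconsistent θstar hmax
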